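/- arXiv:1711.08497 — 9 statements merged into one kernel-verified Lean document; each statement's English description precedes it below -/
import Mathlib

section
/- Let d ≥ 1 be an integer, v ∈ ℝ^d, and π a permutation of {1,…,d}. Let e^j denote the j-th unit coordinate vector of ℝ^d. Then the convex hull of the d+1 points v, v+e^{π(1)}, v+e^{π(1)}+e^{π(2)}, …, v+e^{π(1)}+⋯+e^{π(d)} equals the set {x ∈ ℝ^d : 1 ≥ (x−v)_{π(1)} ≥ (x−v)_{π(2)} ≥ … ≥ (x−v)_{π(d)} ≥ 0}. -/
/-!
The affine bijection `y ↦ v + y ∘ π⁻¹` maps the ordered simplex `Sset d 1` onto `kuhn d v π` and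
the staircase vectors `(1, …, 1, 0, …, 0)` onto the given vertices, so it suffices to treat
`v = 0`, `π = id`. There, `y ∈ Sset d 1` is the convex combination of the staircase vectors with
the weights `y (k - 1) - y k` (reading `y (-1) = 1`, `y d = 0`), whose tail sums telescope to `y`.
-/

/-- The right `d`-simplex `S^α = {x ∈ ℝ^d : α ≥ x_1 ≥ x_2 ≥ … ≥ x_d ≥ 0}`
(coordinates indexed by `Fin d`, in order). -/
def Sset (d : ℕ) (α : ℝ) : Set (Fin d → ℝ) :=
  {x | (∀ i : Fin d, 0 ≤ x i ∧ x i ≤ α) ∧ ∀ i j : Fin d, i ≤ j → x j ≤ x i}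

/-- The Kuhn simplex `k(v,π) = {x : 1 ≥ (x−v)_{π(1)} ≥ … ≥ (x−v)_{π(d)} ≥ 0}`. -/
def kuhn (d : ℕ) (v : Fin d → ℝ) (π : Equiv.Perm (Fin d)) : Set (Fin d → ℝ) :=
  {x | (∀ i : Fin d, 0 ≤ x (π i) - v (π i) ∧ x (π i) - v (π i) ≤ 1) ∧
       ∀ i j : Fin d, i ≤ j → x (π j) - v (π j) ≤ x (π i) - v (π i)}

/-- `(v,π)` with `v ∈ ℤ^d` is admissible for `m` if `v ∈ S^{m-1}` and whenever
`v_j = v_{j+1}`, `j` precedes `j+1` in `π`, i.e. `π⁻¹(j) < π⁻¹(j+1)`. -/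
def admissible (d m : ℕ) (v : Fin d → ℤ) (π : Equiv.Perm (Fin d)) : Prop :=
  ((fun i => (v i : ℝ)) ∈ Sset d ((m : ℝ) - 1)) ∧
  ∀ (j : Fin d) (h : (j : ℕ) + 1 < d),
    v j = v ⟨(j : ℕ) + 1, h⟩ → π.symm j < π.symm ⟨(j : ℕ) + 1, h⟩

open Finset

def staircase (d k : ℕ) : Fin d → ℝ := fun i => if (i : ℕ) < k then 1 else 0

theorem convex_Sset (d : ℕ) (α : ℝ) : Convex ℝ (Sset d α) := by
  intro x hx y hy a b ha hb hab
  refine ⟨fun i => ?_, fun i j hij => ?_⟩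
  · simpa [hab] using convex_Icc (0 : ℝ) α (hx.1 i) (hy.1 i) ha hb hab
  · have := mul_le_mul_of_nonneg_left (hx.2 i j hij) ha
    have := mul_le_mul_of_nonneg_left (hy.2 i j hij) hb
    simp only [Pi.add_apply, Pi.smul_apply, smul_eq_mul]
    linarith

theorem staircase_mem_Sset (d k : ℕ) : staircase d k ∈ Sset d 1 := by
  refine ⟨fun i => ?_, fun i j hij => ?_⟩ <;> simp only [staircase] <;> split_ifs <;> norm_num
  omega

theorem sum_smul_staircase (d : ℕ) (Y : ℕ → ℝ) :
    ∑ k ∈ range (d + 1), (Y k - Y (k + 1)) • staircase d k =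
      fun i : Fin d => Y ((i : ℕ) + 1) - Y (d + 1) := by
  ext i
  have hfilter : (range (d + 1)).filter (fun k => (i : ℕ) < k) = Ico ((i : ℕ) + 1) (d + 1) := by
    ext k; simp; omega
  simp only [Finset.sum_apply, Pi.smul_apply, staircase, smul_eq_mul, mul_ite, mul_one, mul_zero,
    ← Finset.sum_filter, hfilter]
  rw [← neg_sub, ← Finset.sum_Ico_sub Y (by omega), ← Finset.sum_neg_distrib]
  simp

theorem convexHull_staircase (d : ℕ) :
    convexHull ℝ (Set.range fun k : Fin (d + 1) => staircase d k) = Sset d 1 := by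
  refine (convexHull_min ?_ (convex_Sset d 1)).antisymm fun y hy => ?_
  · rintro _ ⟨k, rfl⟩
    exact staircase_mem_Sset d k
  let Y : ℕ → ℝ
    | 0 => 1
    | m + 1 => if h : m < d then y ⟨m, h⟩ else 0
  have hY_anti : ∀ k ≤ d, Y (k + 1) ≤ Y k := by
    rintro (_ | k) hk
    · dsimp only [Y]
      split_ifs
      exacts [(hy.1 _).2, zero_le_one]
    · dsimp only [Y]
      rw [dif_pos (by omega : k < d)]
      split_ifs
      exacts [hy.2 _ _ (Fin.mk_le_mk.2 k.le_succ), (hy.1 _).1]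
  have hy_eq : y = fun i : Fin d => Y ((i : ℕ) + 1) - Y (d + 1) := by
    ext i; simp [Y]
  rw [hy_eq, ← sum_smul_staircase]
  refine (convex_convexHull ℝ _).sum_mem (fun k hk => sub_nonneg.2 (hY_anti k ?_)) ?_
    fun k hk => subset_convexHull ℝ _ ⟨⟨k, mem_range.1 hk⟩, rfl⟩
  · exact Nat.lt_succ_iff.1 (mem_range.1 hk)
  · rw [Finset.sum_range_sub']
    simp [Y]

def kuhnAffineMap (d : ℕ) (v : Fin d → ℝ) (π : Equiv.Perm (Fin d)) :
    (Fin d → ℝ) →ᵃ[ℝ] (Fin d → ℝ) where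
  toFun y := v + y ∘ π.symm
  linear := LinearMap.funLeft ℝ ℝ π.symm
  map_vadd' y z := by ext; simp [LinearMap.funLeft]; ring

theorem kuhn_eq_image (d : ℕ) (v : Fin d → ℝ) (π : Equiv.Perm (Fin d)) :
    kuhn d v π = kuhnAffineMap d v π '' Sset d 1 := by
  ext x
  constructor
  · intro hx
    refine ⟨fun i => x (π i) - v (π i), hx, ?_⟩
    ext j; simp [kuhnAffineMap]
  · rintro ⟨y, hy, rfl⟩
    simp only [kuhn, kuhnAffineMap, AffineMap.coe_mk, Set.mem_ofPred_eq, Pi.add_apply,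
      Function.comp_apply, Equiv.symm_apply_apply, add_sub_cancel_left]
    exact hy

theorem sum_single_perm_eq_staircase_comp (d k : ℕ) (π : Equiv.Perm (Fin d)) :
    ∑ i ∈ univ.filter (fun i : Fin d => (i : ℕ) < k), Pi.single (π i) (1 : ℝ) =
      staircase d k ∘ π.symm := by
  ext j
  simp only [Finset.sum_apply, Pi.single_apply, ← Equiv.symm_apply_eq, Finset.sum_ite_eq,
    Finset.mem_filter, Finset.mem_univ, true_and, Function.comp_apply, staircase]

theorem convexHull_eq_kuhn_general (d : ℕ) (v : Fin d → ℝ) (π : Equiv.Perm (Fin d)) :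
    convexHull ℝ
      {p : Fin d → ℝ | ∃ k : Fin (d + 1),
        p = v + ∑ i ∈ Finset.univ.filter (fun i : Fin d => (i : ℕ) < (k : ℕ)),
              Pi.single (π i) (1 : ℝ)} = kuhn d v π := by
  have hvert : {p : Fin d → ℝ | ∃ k : Fin (d + 1),
        p = v + ∑ i ∈ Finset.univ.filter (fun i : Fin d => (i : ℕ) < (k : ℕ)),
              Pi.single (π i) (1 : ℝ)} =
      kuhnAffineMap d v π '' Set.range fun k : Fin (d + 1) => staircase d k := by
    ext p
    simp [sum_single_perm_eq_staircase_comp, kuhnAffineMap, eq_comm]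
  rw [hvert, ← AffineMap.image_convexHull, convexHull_staircase, kuhn_eq_image]

/-- the convex hull of the points `v`, `v+e^{π(1)}`, …, `v+e^{π(1)}+⋯+e^{π(d)}`
equals the Kuhn simplex `k(v,π)`. -/
theorem convexHull_eq_kuhn (d : ℕ) (hd : 1 ≤ d) (v : Fin d → ℝ) (π : Equiv.Perm (Fin d)) :
    convexHull ℝ
      {p : Fin d → ℝ | ∃ k : Fin (d + 1),
        p = v + ∑ i ∈ Finset.univ.filter (fun i : Fin d => (i : ℕ) < (k : ℕ)),
              Pi.single (π i) (1 : ℝ)} = kuhn d v π :=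
  convexHull_eq_kuhn_general d v π
end

section
/- Let d ≥ 1 be an integer and let π and σ be distinct permutations of {1,…,d}. Then the topological interiors of the Kuhn simplices k(0,π) and k(0,σ) are disjoint. -/
/-!
An interior point `x` of `k(v, π)` satisfies every defining inequality
`(x - v)_{π j} ≤ (x - v)_{π i}` strictly, since the interior of a closed half-space is the open
one. So the coordinates of `x - v` are pairwise distinct and `π` lists them in decreasing order,
which determines `π`.
-/

theorem interior_setOf_apply_add_le_apply {ι : Type*} [Fintype ι] {a b : ι} (hab : a ≠ b)
    (c : ℝ) : interior {x : ι → ℝ | x a + c ≤ x b} = {x | x a + c < x b} := by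
  let L : (ι → ℝ) →L[ℝ] ℝ :=
    ContinuousLinearMap.proj (R := ℝ) (φ := fun _ : ι => ℝ) b - ContinuousLinearMap.proj a
  have hL : ∀ x, L x = x b - x a := fun _ => rfl
  have hsurj : Function.Surjective L := fun t => by
    classical exact ⟨Pi.single b t, by simp [hL, hab]⟩
  have hle : {x : ι → ℝ | x a + c ≤ x b} = L ⁻¹' Set.Ici c := by
    ext x; simp [hL, le_sub_iff_add_le']
  have hlt : {x : ι → ℝ | x a + c < x b} = L ⁻¹' Set.Ioi c := by
    ext x; simp [hL, lt_sub_iff_add_lt']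
  rw [hle, hlt, ← interior_Ici,
    (L.isOpenMap hsurj).preimage_interior_eq_interior_preimage L.continuous]

theorem strictAnti_sub_of_mem_interior_kuhn {d : ℕ} {v x : Fin d → ℝ}
    {π : Equiv.Perm (Fin d)} (hx : x ∈ interior (kuhn d v π)) :
    StrictAnti ((x - v) ∘ π) := by
  intro i j hij
  have hsub : kuhn d v π ⊆ {y | y (π j) + (v (π i) - v (π j)) ≤ y (π i)} :=
    fun y hy => by have := hy.2 i j hij.le; simp only [Set.mem_ofPred_eq]; linarith
  have := interior_mono hsub hx
  rw [interior_setOf_apply_add_le_apply (π.injective.ne hij.ne')] at this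
  simp only [Function.comp_apply, Pi.sub_apply, Set.mem_ofPred_eq] at this ⊢
  linarith

theorem Equiv.Perm.eq_of_strictAnti_comp {n : ℕ} {α : Type*} [LinearOrder α] {f : Fin n → α}
    {π σ : Equiv.Perm (Fin n)} (hπ : StrictAnti (f ∘ π)) (hσ : StrictAnti (f ∘ σ)) :
    π = σ := by
  have hf : Function.Injective f := by
    simpa using hπ.injective.comp π.symm.injective
  exact Equiv.ext fun i => hf (congrFun (Tuple.unique_antitone hπ.antitone hσ.antitone) i)

theorem interiors_disjoint_of_perm_ne_general (d : ℕ)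
    (π σ : Equiv.Perm (Fin d)) (hne : π ≠ σ) :
    Disjoint (interior (kuhn d 0 π)) (interior (kuhn d 0 σ)) :=
  Set.disjoint_left.2 fun _ hxπ hxσ => hne <|
    Equiv.Perm.eq_of_strictAnti_comp (strictAnti_sub_of_mem_interior_kuhn hxπ)
      (strictAnti_sub_of_mem_interior_kuhn hxσ)

/-- distinct Kuhn simplices `k(0,π)`, `k(0,σ)` have disjoint interiors. -/
theorem interiors_disjoint_of_perm_ne (d : ℕ) (hd : 1 ≤ d)
    (π σ : Equiv.Perm (Fin d)) (hne : π ≠ σ) :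
    Disjoint (interior (kuhn d 0 π)) (interior (kuhn d 0 σ)) :=
  interiors_disjoint_of_perm_ne_general d π σ hne
end

section
/- Let d ≥ 1 be an integer. The union of the Kuhn simplices k(v,π), taken over all integer vectors v ∈ ℤ^d and all permutations π of {1,…,d}, equals all of ℝ^d. -/
/-! Every `x` lies in `k(⌊x⌋, π)`, where `π` lists the coordinates in order of decreasing
fractional part: the fractional parts lie in `[0, 1)`, and `π` makes them decrease. -/

theorem Tuple.exists_perm_antitone {n : ℕ} {α : Type*} [LinearOrder α] (f : Fin n → α) :
    ∃ π : Equiv.Perm (Fin n), Antitone (f ∘ π) :=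
  ⟨Fin.revPerm.trans (Tuple.sort f), fun _ _ hij =>
    Tuple.monotone_sort f (Fin.rev_le_rev.mpr hij)⟩

theorem mem_kuhn_iff {d : ℕ} {v x : Fin d → ℝ} {π : Equiv.Perm (Fin d)} :
    x ∈ kuhn d v π ↔
      (∀ i, x i - v i ∈ Set.Icc 0 1) ∧ Antitone fun i => x (π i) - v (π i) := by
  refine and_congr ⟨fun h i => ?_, fun h i => h (π i)⟩ Iff.rfl
  simpa using h (π.symm i)

theorem iUnion_kuhn_eq_univ_general (d : ℕ) :
    ⋃ (v : Fin d → ℤ) (π : Equiv.Perm (Fin d)),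
      kuhn d (fun i => (v i : ℝ)) π = (Set.univ : Set (Fin d → ℝ)) := by
  refine Set.eq_univ_of_forall fun x => ?_
  obtain ⟨π, hπ⟩ := Tuple.exists_perm_antitone fun i => Int.fract (x i)
  simp only [Set.mem_iUnion]
  refine ⟨fun i => ⌊x i⌋, π, mem_kuhn_iff.2 ⟨fun i => ?_, ?_⟩⟩
  · rw [Int.self_sub_floor]
    exact ⟨Int.fract_nonneg _, (Int.fract_lt_one _).le⟩
  · simp only [Int.self_sub_floor]
    exact hπ

/-- the Kuhn simplices `k(v,π)`, over all integer vectors `v` and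
permutations `π`, cover (indeed, their union equals) all of `ℝ^d`. -/
theorem iUnion_kuhn_eq_univ (d : ℕ) (hd : 1 ≤ d) :
    ⋃ (v : Fin d → ℤ) (π : Equiv.Perm (Fin d)),
      kuhn d (fun i => (v i : ℝ)) π = (Set.univ : Set (Fin d → ℝ)) :=
  iUnion_kuhn_eq_univ_general d
end

section
/- Let d ≥ 1 be an integer, and let (v,π) ≠ (v',π') be two distinct pairs with v, v' ∈ ℤ^d and π, π' permutations of {1,…,d}. Then the topological interiors of the Kuhn simplices k(v,π) and k(v',π') are disjoint. -/
lemma update_mem_ball {d : ℕ} (x : Fin d → ℝ) (k : Fin d) {ε δ : ℝ} (hε : 0 < ε)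
    (hδ : |δ| < ε) : Function.update x k (x k + δ) ∈ Metric.ball x ε := by
  rw [Metric.mem_ball, dist_pi_lt_iff hε]
  intro b
  rcases eq_or_ne b k with rfl | hbk
  · rw [Function.update_self, Real.dist_eq]
    simpa using hδ
  · rw [Function.update_of_ne hbk]
    simpa using hε

lemma kuhn_interior_strict {d : ℕ} {v : Fin d → ℝ} {π : Equiv.Perm (Fin d)} {x : Fin d → ℝ}
    (hx : x ∈ interior (kuhn d v π)) :
    (∀ i : Fin d, 0 < x (π i) - v (π i) ∧ x (π i) - v (π i) < 1) ∧
    ∀ i j : Fin d, i < j → x (π j) - v (π j) < x (π i) - v (π i) := by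
  obtain ⟨ε, hε, hball⟩ := Metric.isOpen_iff.1 isOpen_interior x hx
  have hsub : Metric.ball x ε ⊆ kuhn d v π := hball.trans interior_subset
  have hxk : x ∈ kuhn d v π := interior_subset hx
  constructor
  · intro i
    constructor
    · rcases lt_or_eq_of_le (hxk.1 i).1 with h | h
      · exact h
      · exfalso
        have habs : |(-ε/2 : ℝ)| < ε := by
          rw [abs_of_nonpos (by linarith)]; linarith
        have hy := hsub (update_mem_ball x (π i) hε habs)
        have := (hy).1 i
        rw [Function.update_self] at this
        have h0 := this.1
        linarith
    · rcases lt_or_eq_of_le (hxk.1 i).2 with h | h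
      · exact h
      · exfalso
        have habs : |(ε/2 : ℝ)| < ε := by
          rw [abs_of_nonneg (by linarith)]; linarith
        have hy := hsub (update_mem_ball x (π i) hε habs)
        have := (hy.1 i).2
        rw [Function.update_self] at this
        linarith
  · intro i j hij
    rcases lt_or_eq_of_le (hxk.2 i j hij.le) with h | h
    · exact h
    · exfalso
      have habs : |(ε/2 : ℝ)| < ε := by
        rw [abs_of_nonneg (by linarith)]; linarith
      have hy := hsub (update_mem_ball x (π j) hε habs)
      have h2 := hy.2 i j hij.le
      have hne : π i ≠ π j := fun hc => hij.ne (π.injective hc)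
      rw [Function.update_self, Function.update_of_ne hne] at h2
      linarith

/-- Kuhn simplices indexed by distinct pairs `(v,π) ≠ (v',π')` with
integer `v, v'` have disjoint interiors. -/
theorem interiors_disjoint_of_pair_ne (d : ℕ) (hd : 1 ≤ d)
    (v v' : Fin d → ℤ) (π π' : Equiv.Perm (Fin d)) (hne : (v, π) ≠ (v', π')) :
    Disjoint (interior (kuhn d (fun i => (v i : ℝ)) π))
      (interior (kuhn d (fun i => (v' i : ℝ)) π')) := by
  rw [Set.disjoint_left]
  rintro x hx hx'
  obtain ⟨h1, h2⟩ := kuhn_interior_strict hx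
  obtain ⟨h1', h2'⟩ := kuhn_interior_strict hx'
  -- v = v'
  have hfloor : ∀ (w : Fin d → ℤ) (σ : Equiv.Perm (Fin d)),
      (∀ i : Fin d, 0 < x (σ i) - (w (σ i) : ℝ) ∧ x (σ i) - (w (σ i) : ℝ) < 1) →
      ∀ k : Fin d, w k = ⌊x k⌋ := by
    intro w σ h k
    have := h (σ.symm k)
    rw [Equiv.apply_symm_apply] at this
    symm
    rw [Int.floor_eq_iff]
    refine ⟨by linarith [this.1], by push_cast; linarith [this.2]⟩
  have hvv' : v = v' := by
    funext k
    rw [hfloor v π h1 k, hfloor v' π' h1' k]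
  subst hvv'
  -- π = π'
  have hππ' : π = π' := by
    have hmono : StrictMono (fun i => π'.symm (π i)) := by
      intro i j hij
      by_contra hc
      push_neg at hc
      rcases lt_or_eq_of_le hc with h | h
      · have := h2' _ _ h
        rw [Equiv.apply_symm_apply, Equiv.apply_symm_apply] at this
        exact absurd this (not_lt.2 (h2 i j hij).le)
      · have : π i = π j := by
          have := congrArg π' h
          rwa [Equiv.apply_symm_apply, Equiv.apply_symm_apply, eq_comm] at this
        exact hij.ne (π.injective this)
    have hid : (fun i => π'.symm (π i)) = (id : Fin d → Fin d) := by
      apply (hmono.range_inj strictMono_id).1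
      rw [Set.range_id]
      exact Set.range_eq_univ.2 fun b => ⟨π.symm (π' b), by simp⟩
    apply Equiv.ext
    intro i
    have := congrFun hid i
    simpa using congrArg π' this
  exact hne (by rw [hππ'])
end

section
/- Let d ≥ 1 and n ≥ 1 be integers, let v ∈ ℤ^d, and let π be a permutation of {1,…,d}. Then the Kuhn simplex k(v,π) is contained in S^n = {x ∈ ℝ^d : n ≥ x_1 ≥ x_2 ≥ … ≥ x_d ≥ 0} if and only if v ∈ S^{n−1} and, for every j with 1 ≤ j < d such that v_j = v_{j+1}, the index j precedes j+1 in π (i.e. π⁻¹(j) < π⁻¹(j+1)). -/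
/-! Necessity: `v` and the vertices `v + e_{π(0)} + … + e_{π(c)}` lie in `k(v,π)`; the vertex
with `π(c) = j+1` raises `x_{j+1}` by `1`, and `x_j` too only if `j` precedes `j+1` in `π`.
Sufficiency: for integral `v` a strict drop `v_j > v_{j+1}` is at least `1` and absorbs the
perturbation `x - v ∈ [0,1]^d`, while a tie `v_j = v_{j+1}` is resolved by the order in `π`. -/

theorem Fin.antitone_of_succ_le {α : Type*} [Preorder α] {d : ℕ} {f : Fin d → α}
    (h : ∀ (j : Fin d) (hj : (j : ℕ) + 1 < d), f ⟨j + 1, hj⟩ ≤ f j) : Antitone f := by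
  cases d with
  | zero => exact fun i => i.elim0
  | succ n => exact Fin.antitone_iff_succ_le.2 fun i => h i.castSucc (by simp)

section Kuhn

variable {d : ℕ} (v : Fin d → ℝ) (π : Equiv.Perm (Fin d))

theorem sub_mem_Icc_of_mem_kuhn {x : Fin d → ℝ} (hx : x ∈ kuhn d v π) (k : Fin d) :
    0 ≤ x k - v k ∧ x k - v k ≤ 1 := by
  simpa using hx.1 (π.symm k)

theorem sub_le_sub_of_mem_kuhn {x : Fin d → ℝ} (hx : x ∈ kuhn d v π) {k l : Fin d}
    (h : π.symm k ≤ π.symm l) : x l - v l ≤ x k - v k := by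
  simpa using hx.2 _ _ h

theorem self_mem_kuhn : v ∈ kuhn d v π := by
  simp [kuhn]

/-- The vertex `v + e_{π(0)} + … + e_{π(c)}` of `k(v,π)`. -/
def kuhnVertex (c : Fin d) : Fin d → ℝ :=
  fun k => v k + if π.symm k ≤ c then 1 else 0

theorem kuhnVertex_of_le {c k : Fin d} (h : π.symm k ≤ c) : kuhnVertex v π c k = v k + 1 := by
  simp [kuhnVertex, h]

theorem kuhnVertex_of_lt {c k : Fin d} (h : c < π.symm k) : kuhnVertex v π c k = v k := by
  simp [kuhnVertex, not_le.2 h]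

theorem kuhnVertex_mem_kuhn (c : Fin d) : kuhnVertex v π c ∈ kuhn d v π := by
  refine ⟨fun i => ?_, fun i j hij => ?_⟩
  · simp only [kuhnVertex, Equiv.symm_apply_apply, add_sub_cancel_left]
    split_ifs <;> norm_num
  · simp only [kuhnVertex, Equiv.symm_apply_apply, add_sub_cancel_left]
    split_ifs with hj hi
    · rfl
    · exact absurd (hij.trans hj) hi
    · norm_num
    · rfl

theorem symm_lt_symm_succ_of_kuhn_subset_Sset {α : ℝ} (hsub : kuhn d v π ⊆ Sset d α)
    (j : Fin d) (hj : (j : ℕ) + 1 < d) (hv : v j = v ⟨j + 1, hj⟩) :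
    π.symm j < π.symm ⟨j + 1, hj⟩ := by
  by_contra hle
  have hne : π.symm ⟨j + 1, hj⟩ ≠ π.symm j :=
    π.symm.injective.ne (Fin.ne_of_val_ne (by simp))
  have hlt : π.symm ⟨j + 1, hj⟩ < π.symm j := lt_of_le_of_ne (not_lt.1 hle) hne
  have hanti := (hsub (kuhnVertex_mem_kuhn v π (π.symm ⟨j + 1, hj⟩))).2 j ⟨j + 1, hj⟩
    (Fin.le_def.2 (Nat.le_succ _))
  rw [kuhnVertex_of_le v π le_rfl, kuhnVertex_of_lt v π hlt, hv] at hanti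
  linarith

end Kuhn

theorem admissible_of_kuhn_subset_Sset {d n : ℕ} {v : Fin d → ℤ} {π : Equiv.Perm (Fin d)}
    (hsub : kuhn d (fun i => (v i : ℝ)) π ⊆ Sset d n) : admissible d n v π := by
  have hvS := hsub (self_mem_kuhn _ π)
  refine ⟨⟨fun i => ⟨(hvS.1 i).1, ?_⟩, hvS.2⟩, fun j hj hv =>
    symm_lt_symm_succ_of_kuhn_subset_Sset _ π hsub j hj (by exact_mod_cast hv)⟩
  have hvertex := ((hsub (kuhnVertex_mem_kuhn _ π (π.symm i))).1 i).2
  rw [kuhnVertex_of_le _ π le_rfl] at hvertex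
  linarith

theorem kuhn_subset_Sset_of_admissible {d n : ℕ} {v : Fin d → ℤ} {π : Equiv.Perm (Fin d)}
    (hadm : admissible d n v π) : kuhn d (fun i => (v i : ℝ)) π ⊆ Sset d n := by
  obtain ⟨⟨hv_bounds, hv_anti⟩, hv_order⟩ := hadm
  intro x hx
  have hx_bounds := sub_mem_Icc_of_mem_kuhn _ π hx
  refine ⟨fun i => ⟨by linarith [(hv_bounds i).1, (hx_bounds i).1],
    by linarith [(hv_bounds i).2, (hx_bounds i).2]⟩, Fin.antitone_of_succ_le fun j hj => ?_⟩
  rcases eq_or_ne (v j) (v ⟨j + 1, hj⟩) with heq | hne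
  · have hperturb := sub_le_sub_of_mem_kuhn _ π hx (hv_order j hj heq).le
    have heq' : (v j : ℝ) = v ⟨j + 1, hj⟩ := by exact_mod_cast heq
    linarith
  · have hdrop : v ⟨j + 1, hj⟩ + 1 ≤ v j := by
      have : (v ⟨j + 1, hj⟩ : ℝ) ≤ v j := hv_anti j ⟨j + 1, hj⟩ (Fin.le_def.2 (Nat.le_succ _))
      have : v ⟨j + 1, hj⟩ ≤ v j := by exact_mod_cast this
      omega
    have hdrop' : (v ⟨j + 1, hj⟩ : ℝ) + 1 ≤ v j := by exact_mod_cast hdrop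
    linarith [(hx_bounds j).1, (hx_bounds ⟨j + 1, hj⟩).2]

theorem kuhn_subset_Sset_iff_general (d n : ℕ)
    (v : Fin d → ℤ) (π : Equiv.Perm (Fin d)) :
    kuhn d (fun i => (v i : ℝ)) π ⊆ Sset d (n : ℝ) ↔ admissible d n v π :=
  ⟨admissible_of_kuhn_subset_Sset, kuhn_subset_Sset_of_admissible⟩

/-- `k(v,π) ⊆ S^n` iff `(v,π)` is admissible for `n`, i.e. `v ∈ S^{n-1}`
and whenever `v_j = v_{j+1}`, `j` precedes `j+1` in `π`. -/
theorem kuhn_subset_Sset_iff (d n : ℕ) (hd : 1 ≤ d) (hn : 1 ≤ n)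
    (v : Fin d → ℤ) (π : Equiv.Perm (Fin d)) :
    kuhn d (fun i => (v i : ℝ)) π ⊆ Sset d (n : ℝ) ↔ admissible d n v π :=
  kuhn_subset_Sset_iff_general d n v π
end

section
/- Let d ≥ 1 and n ≥ 1 be integers. The number of admissible pairs (v,π) for n that additionally satisfy v_d = 0 equals n^d − (n−1)^d. -/
/-!
Listing the coordinates of `v` in the order given by `π` turns an admissible pair `(v, π)` into a
word `w = v ∘ π ∈ {0, …, n-1}^d`. Conversely, `v` is the decreasing rearrangement of `w`, and the
tie-breaking condition says exactly that `π⁻¹` is the stable sorting permutation of `w`, so this is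
a bijection. Since `v` is decreasing and nonnegative, `v_d = 0` means that `w` takes the value `0`,
and `n^d - (n-1)^d` words do.
-/

open Finset OrderDual

lemma Fin.strictMono_iff_lt_of_add_one_lt {α : Type*} [Preorder α] {d : ℕ} (f : Fin d → α) :
    StrictMono f ↔ ∀ (j : Fin d) (h : (j : ℕ) + 1 < d), f j < f ⟨j + 1, h⟩ := by
  cases d with
  | zero => exact ⟨fun _ j => j.elim0, fun _ i => i.elim0⟩
  | succ e =>
    rw [Fin.strictMono_iff_lt_succ]
    exact ⟨fun hf j h => hf ⟨j, by omega⟩, fun hf i => hf i.castSucc (by simp)⟩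

lemma Antitone.apply_eq_zero_iff_exists {ι α : Type*} [Preorder ι] [PartialOrder α] [Zero α]
    {v : ι → α} (hv : Antitone v) (hnonneg : ∀ i, 0 ≤ v i) {k : ι} (hk : IsTop k) :
    v k = 0 ↔ ∃ i, v i = 0 :=
  ⟨fun h => ⟨k, h⟩, fun ⟨i, hi⟩ => le_antisymm (hi ▸ hv (hk i)) (hnonneg k)⟩

lemma card_pi_Ico_exists_eq_zero (ι : Type*) [Fintype ι] (n : ℕ) :
    Nat.card {w : ι → ℤ // (∀ i, w i ∈ Ico (0 : ℤ) n) ∧ ∃ i, w i = 0} =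
      n ^ Fintype.card ι - (n - 1) ^ Fintype.card ι := by
  classical
  have hmem : ∀ w : ι → ℤ, ((∀ i, w i ∈ Ico (0 : ℤ) n) ∧ ∃ i, w i = 0) ↔
      w ∈ Fintype.piFinset (fun _ => Ico (0 : ℤ) n) \ Fintype.piFinset (fun _ => Ico 1 n) := by
    intro w
    simp only [mem_sdiff, Fintype.mem_piFinset, mem_Ico, not_forall]
    refine and_congr_right fun hw => exists_congr fun i => ?_
    have := hw i
    omega
  rw [Nat.card_congr (Equiv.subtypeEquivRight hmem), Nat.card_eq_fintype_card, Fintype.card_coe,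
    card_sdiff_of_subset (Fintype.piFinset_subset _ _ fun _ => Ico_subset_Ico_left zero_le_one)]
  simp

/-- Both sides say that `i ↦ (v i, π⁻¹ i)` is strictly increasing for the lexicographic order
on `αᵒᵈ ×ₗ Fin d`. -/
lemma antitone_and_ties_iff_symm_eq_sort {α : Type*} [LinearOrder α] {d : ℕ} (v : Fin d → α)
    (π : Equiv.Perm (Fin d)) :
    (Antitone v ∧ ∀ (j : Fin d) (h : (j : ℕ) + 1 < d),
        v j = v ⟨j + 1, h⟩ → π.symm j < π.symm ⟨j + 1, h⟩) ↔
      π.symm = Tuple.sort (toDual ∘ v ∘ π) := by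
  have hgraph : StrictMono (π.symm.trans (Tuple.graphEquiv₁ (toDual ∘ v ∘ π))) ↔
      StrictMono fun i => toLex (toDual (v i), π.symm i) := by
    have hval : (fun i => ((π.symm.trans (Tuple.graphEquiv₁ (toDual ∘ v ∘ π))) i :
        αᵒᵈ ×ₗ Fin d)) = fun i => toLex (toDual (v i), π.symm i) := by
      funext i
      show toLex (toDual (v (π (π.symm i))), π.symm i) = _
      rw [π.apply_symm_apply]
    -- `<` on the subtype `Tuple.graph f` is `<` of the underlying pairs
    exact hval ▸ Iff.rfl
  rw [Tuple.eq_sort_iff', hgraph]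
  constructor
  · rintro ⟨hanti, hties⟩
    refine (Fin.strictMono_iff_lt_of_add_one_lt _).2 fun j h => Prod.Lex.toLex_lt_toLex.2 ?_
    rcases (hanti (Fin.mk_le_mk.2 (Nat.le_succ j) : j ≤ ⟨j + 1, h⟩)).lt_or_eq with hlt | heq
    · exact Or.inl hlt
    · exact Or.inr ⟨heq.symm, hties j h heq.symm⟩
  · intro hlex
    refine ⟨fun i j hij => Prod.Lex.monotone_fst _ _ (hlex.monotone hij), fun j h heq => ?_⟩
    have hlt := Prod.Lex.toLex_lt_toLex.1 ((Fin.strictMono_iff_lt_of_add_one_lt _).1 hlex j h)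
    exact (hlt.resolve_left (by simp [heq])).2

def sortDescEquiv (α : Type*) [LinearOrder α] (d : ℕ) :
    {p : (Fin d → α) × Equiv.Perm (Fin d) // p.2.symm = Tuple.sort (toDual ∘ p.1 ∘ p.2)} ≃
      (Fin d → α) where
  toFun p := p.1.1 ∘ p.1.2
  invFun w := ⟨(w ∘ Tuple.sort (toDual ∘ w), (Tuple.sort (toDual ∘ w)).symm), by
    simp [Function.comp_assoc]⟩
  left_inv := by
    rintro ⟨⟨v, π⟩, hπ⟩
    simp only at hπ
    simp [← hπ, Function.comp_assoc]
  right_inv w := by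
    funext i
    simp

lemma intCast_mem_Sset_iff {d m : ℕ} (v : Fin d → ℤ) :
    (fun i => (v i : ℝ)) ∈ Sset d ((m : ℝ) - 1) ↔ (∀ i, v i ∈ Ico (0 : ℤ) m) ∧ Antitone v := by
  have hlt : ∀ i, ((v i : ℝ) ≤ m - 1 ↔ v i < m) := fun i => by
    rw [Int.lt_iff_add_one_le, le_sub_iff_add_le]
    exact_mod_cast Iff.rfl
  simp only [Sset, Set.mem_ofPred_eq, mem_Ico, Int.cast_nonneg_iff, hlt, Int.cast_le, Antitone]

lemma admissible_iff {d m : ℕ} {v : Fin d → ℤ} {π : Equiv.Perm (Fin d)} :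
    admissible d m v π ↔
      (∀ i, v i ∈ Ico (0 : ℤ) m) ∧ π.symm = Tuple.sort (toDual ∘ v ∘ π) := by
  rw [admissible, intCast_mem_Sset_iff, ← antitone_and_ties_iff_symm_eq_sort, and_assoc]

lemma admissible_and_eq_zero_iff {d n : ℕ} {v : Fin d → ℤ} {π : Equiv.Perm (Fin d)}
    (hπ : π.symm = Tuple.sort (toDual ∘ v ∘ π)) {k : Fin d} (hk : IsTop k) :
    admissible d n v π ∧ v k = 0 ↔ (∀ i, v (π i) ∈ Ico (0 : ℤ) n) ∧ ∃ i, v (π i) = 0 := by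
  have hv : Antitone v := ((antitone_and_ties_iff_symm_eq_sort v π).2 hπ).1
  rw [admissible_iff, and_iff_left hπ, π.forall_congr_right (q := (v · ∈ Ico (0 : ℤ) n)),
    π.exists_congr_right (q := (v · = 0))]
  exact and_congr_right fun hrange =>
    hv.apply_eq_zero_iff_exists (fun i => (mem_Ico.1 (hrange i)).1) hk

/-- the number of admissible pairs `(v,π)` for `n` with `v_d = 0`
equals `n^d - (n-1)^d`. -/
theorem card_admissible_base (d n : ℕ) (hd : 1 ≤ d) :
    Nat.card {p : (Fin d → ℤ) × Equiv.Perm (Fin d) //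
        admissible d n p.1 p.2 ∧ p.1 ⟨d - 1, by omega⟩ = 0}
      = n ^ d - (n - 1) ^ d := by
  have hlast : IsTop (⟨d - 1, by omega⟩ : Fin d) := fun i => Nat.le_sub_one_of_lt i.isLt
  have e : {p : (Fin d → ℤ) × Equiv.Perm (Fin d) //
        admissible d n p.1 p.2 ∧ p.1 ⟨d - 1, by omega⟩ = 0} ≃
      {w : Fin d → ℤ // (∀ i, w i ∈ Ico (0 : ℤ) n) ∧ ∃ i, w i = 0} :=
    (Equiv.subtypeSubtypeEquivSubtype fun h => (admissible_iff.1 h.1).2).symm.trans <|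
      (sortDescEquiv ℤ d).subtypeEquiv fun p => admissible_and_eq_zero_iff p.2 hlast
  rw [Nat.card_congr e, card_pi_Ico_exists_eq_zero, Fintype.card_fin]
end

section
/- Let d ≥ 2 and n ≥ 1 be integers and set δ := 1/(n+2). Then the base S^{n+δ}_1 := {x ∈ S^{n+δ} : 0 ≤ x_d ≤ 1+δ} of the right d-simplex S^{n+δ} = {x ∈ ℝ^d : n+δ ≥ x_1 ≥ x_2 ≥ … ≥ x_d ≥ 0} can be covered by (n+1)^d − n^d unit right d-simplices; that is, there exist N := (n+1)^d − n^d pairs (v_i, π_i) with v_i ∈ ℝ^d and π_i a permutation of {1,…,d} such that S^{n+δ}_1 ⊆ ⋃_{i=1}^N k(v_i, π_i). -/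
open Equiv OrderDual

namespace Tuple

variable {α : Type*} [LinearOrder α] {n : ℕ} {f : Fin n → α}

theorem sort_symm_lt_sort_symm {p q : Fin n} (hpq : p < q) (hf : f p ≤ f q) :
    (sort f).symm p < (sort f).symm q := by
  obtain ⟨hmono, htie⟩ := eq_sort_iff.mp (rfl : sort f = sort f)
  by_contra! h
  have hlt : (sort f).symm q < (sort f).symm p :=
    h.lt_of_ne fun h' => hpq.ne ((sort f).symm.injective h').symm
  have hfq : f q = f p := by
    have := hmono hlt.le
    simp only [Function.comp_apply, apply_symm_apply] at this
    exact this.antisymm hf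
  have := htie _ _ hlt (by simp [hfq])
  simp only [apply_symm_apply] at this
  exact this.not_gt hpq

theorem sort_last_eq_last_iff {f : Fin (n + 1) → α} :
    sort f (Fin.last n) = Fin.last n ↔ ∀ j, f j ≤ f (Fin.last n) := by
  refine ⟨fun h j => ?_, fun h => ?_⟩
  · simpa [h] using monotone_sort f (Fin.le_last ((sort f).symm j))
  · by_contra hne
    have := sort_symm_lt_sort_symm ((Fin.le_last _).lt_of_ne hne) (h _)
    simp only [symm_apply_apply] at this
    exact this.not_ge (Fin.le_last _)

end Tuple

theorem Nat.findGreatest_eq_or_not_succ (P : ℕ → Prop) [DecidablePred P] (n : ℕ) :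
    findGreatest P n = n ∨ ¬P (findGreatest P n + 1) :=
  (findGreatest_le n).eq_or_lt.imp id (findGreatest_is_greatest (Nat.lt_succ_self _))

theorem card_exists_eq_zero (ι : Type*) [Finite ι] (n : ℕ) :
    Nat.card {F : ι → Fin (n + 1) // ∃ i, F i = 0} = (n + 1) ^ Nat.card ι - n ^ Nat.card ι := by
  classical
  have := Fintype.ofFinite ι
  have hcompl := Fintype.card_subtype_compl fun F : ι → Fin (n + 1) => ∃ i, F i = 0
  rw [Fintype.card_congr ((subtypeEquivRight fun F => not_exists).trans
    (subtypePiEquivPi (p := fun _ y => ¬y = 0)))] at hcompl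
  have hle := Fintype.card_subtype_le fun F : ι → Fin (n + 1) => ∃ i, F i = 0
  simp only [Fintype.card_fun, Fintype.card_subtype_compl, Fintype.card_subtype_eq,
    Fintype.card_fin, Nat.add_sub_cancel] at hcompl hle
  rw [Nat.card_eq_fintype_card, Nat.card_eq_fintype_card]
  omega

noncomputable section

namespace BaseCover

def kuhnPerm {d n : ℕ} (F : Fin d → Fin (n + 1)) : Perm (Fin d) :=
  Tuple.sort (toDual ∘ F)

def kuhnVertex {m n : ℕ} (c : ℕ → ℝ) (δ : ℝ) (F : Fin (m + 1) → Fin (n + 1)) :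
    Fin (m + 1) → ℝ :=
  fun j => c (F (kuhnPerm F j)) + if kuhnPerm F (Fin.last m) = Fin.last m then 0 else δ

structure IsCellAssignment {m : ℕ} (c : ℕ → ℝ) (n : ℕ) (δ : ℝ) (x : Fin (m + 1) → ℝ)
    (w : Fin (m + 1) → ℕ) (s : ℝ) : Prop where
  le_n : ∀ j, w j ≤ n
  antitone : Antitone w
  last_eq_zero : w (Fin.last m) = 0
  le_apply : ∀ j, c (w j) + s ≤ x j
  apply_le : ∀ j, x j ≤ c (w j) + s + 1
  shift_eq : s = if ∀ j, x (Fin.last m) - c 0 ≤ x j - c (w j) then 0 else δ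

theorem IsCellAssignment.exists_mem_kuhn {m n : ℕ} {c : ℕ → ℝ} {δ s : ℝ}
    {x : Fin (m + 1) → ℝ} {w : Fin (m + 1) → ℕ} (h : IsCellAssignment c n δ x w s)
    (hx : Antitone x) :
    ∃ F : Fin (m + 1) → Fin (n + 1), (∃ i, F i = 0) ∧
      x ∈ kuhn (m + 1) (kuhnVertex c δ F) (kuhnPerm F).symm := by
  set t : Fin (m + 1) → ℝ := fun j => x j - (c (w j) + s)
  set π := Tuple.sort (toDual ∘ t)
  have ht : Antitone (t ∘ π) := monotone_toDual_comp_iff.mp (Tuple.monotone_sort (toDual ∘ t))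
  let F : Fin (m + 1) → Fin (n + 1) := fun a => ⟨w (π a), Nat.lt_succ_of_le (h.le_n _)⟩
  have hF : kuhnPerm F = π.symm := by
    refine (Tuple.eq_sort_iff.mpr ⟨fun a b hab => ?_, fun p q hpq hFpq => ?_⟩).symm
    · simpa [F] using h.antitone hab
    · have hw : w p = w q := by simpa [F] using hFpq
      refine Tuple.sort_symm_lt_sort_symm hpq (toDual_le_toDual.mpr ?_)
      simp only [t, hw]
      linarith [hx hpq.le]
  have hshift : (if kuhnPerm F (Fin.last m) = Fin.last m then 0 else δ) = s := by
    have hlast : kuhnPerm F (Fin.last m) = Fin.last m ↔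
        ∀ j, x (Fin.last m) - c 0 ≤ x j - c (w j) := by
      rw [hF, symm_apply_eq, eq_comm, Tuple.sort_last_eq_last_iff]
      refine forall_congr' fun j => ?_
      simp only [Function.comp_apply, toDual_le_toDual, t, h.last_eq_zero]
      constructor <;> intro <;> linarith
    rw [h.shift_eq]
    exact if_congr hlast rfl rfl
  have hvertex : ∀ j, kuhnVertex c δ F j = c (w j) + s := fun j => by
    simp only [kuhnVertex, hshift]
    simp [hF, F]
  refine ⟨F, ⟨π.symm (Fin.last m), by simp [F, h.last_eq_zero]⟩, fun a => ?_, fun a b hab => ?_⟩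
  · simp only [hF, symm_symm, hvertex]
    exact ⟨by linarith [h.le_apply (π a)], by linarith [h.apply_le (π a)]⟩
  · simp only [hF, symm_symm, hvertex]
    exact ht hab

def cellBase (δ : ℝ) (k : ℕ) : ℝ :=
  if k = 0 then 0 else (k + 1) * (1 - δ) - 1

variable {δ : ℝ} {n k : ℕ}

@[simp]
theorem cellBase_zero : cellBase δ 0 = 0 := if_pos rfl

theorem cellBase_of_ne_zero (hk : k ≠ 0) : cellBase δ k = (k + 1) * (1 - δ) - 1 := if_neg hk

theorem cellBase_one : cellBase δ 1 = 1 - 2 * δ := by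
  rw [cellBase_of_ne_zero one_ne_zero]
  ring

theorem cellBase_succ_of_ne_zero (hk : k ≠ 0) : cellBase δ (k + 1) = cellBase δ k + (1 - δ) := by
  rw [cellBase_of_ne_zero hk, cellBase_of_ne_zero k.succ_ne_zero]
  push_cast
  ring

theorem cellBase_succ_le (hδ : 0 ≤ δ) (k : ℕ) : cellBase δ (k + 1) ≤ cellBase δ k + (1 - δ) := by
  rcases eq_or_ne k 0 with rfl | hk
  · rw [zero_add, cellBase_one, cellBase_zero]
    linarith
  · exact (cellBase_succ_of_ne_zero hk).le

theorem cellBase_mono (hδ : 2 * δ ≤ 1) : Monotone (cellBase δ) := by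
  refine monotone_nat_of_le_succ fun k => ?_
  rcases eq_or_ne k 0 with rfl | hk
  · rw [zero_add, cellBase_one, cellBase_zero]
    linarith
  · rw [cellBase_succ_of_ne_zero hk]
    linarith

theorem cellBase_add_one (hn : n ≠ 0) (hδ : (n + 2) * δ = 1) : cellBase δ n + 1 = n + δ := by
  rw [cellBase_of_ne_zero hn]
  linear_combination -hδ

/-- Points of `[0, 1]` get cell `0` even when they also lie in cell `1`, so that the last
coordinate can. -/
def unshiftedCell (δ : ℝ) (n : ℕ) (y : ℝ) : ℕ :=
  if y ≤ 1 then 0 else Nat.findGreatest (fun k => cellBase δ k + δ < y) n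

def shiftedCell (δ : ℝ) (n : ℕ) (y : ℝ) : ℕ :=
  Nat.findGreatest (fun k => cellBase δ k + δ ≤ y) n

variable {y : ℝ}

theorem unshiftedCell_of_le_one (hy : y ≤ 1) : unshiftedCell δ n y = 0 := if_pos hy

theorem unshiftedCell_le : unshiftedCell δ n y ≤ n := by
  unfold unshiftedCell
  split
  · exact n.zero_le
  · exact Nat.findGreatest_le n

theorem unshiftedCell_mono : Monotone (unshiftedCell δ n) := by
  intro y z hyz
  by_cases hy : y ≤ 1
  · simp [unshiftedCell_of_le_one hy]
  · have hz : ¬z ≤ 1 := fun hz => hy (hyz.trans hz)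
    simp only [unshiftedCell, if_neg hy, if_neg hz]
    exact Nat.findGreatest_mono_left (fun k hk => hk.trans_le hyz) n

theorem cellBase_unshiftedCell_add_lt (hδ : δ ≤ 1) (hy : 1 < y) :
    cellBase δ (unshiftedCell δ n y) + δ < y := by
  rw [unshiftedCell, if_neg hy.not_ge]
  exact Nat.findGreatest_spec (P := fun k => cellBase δ k + δ < y) n.zero_le
    (by rw [cellBase_zero, zero_add]; exact hδ.trans_lt hy)

theorem le_cellBase_unshiftedCell_add_one (hδ : 0 ≤ δ) (htop : y ≤ cellBase δ n + 1) :
    y ≤ cellBase δ (unshiftedCell δ n y) + 1 := by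
  by_cases hy : y ≤ 1
  · simpa [unshiftedCell_of_le_one hy] using hy
  rw [unshiftedCell, if_neg hy]
  set k := Nat.findGreatest (fun k => cellBase δ k + δ < y) n
  obtain hk | hk : k = n ∨ ¬cellBase δ (k + 1) + δ < y := Nat.findGreatest_eq_or_not_succ _ n
  · rwa [hk]
  rw [not_lt] at hk
  rcases eq_or_ne k 0 with hk0 | hk0
  · rw [hk0, zero_add, cellBase_one] at hk
    linarith
  · rw [cellBase_succ_of_ne_zero hk0] at hk
    linarith

theorem shiftedCell_le : shiftedCell δ n y ≤ n := Nat.findGreatest_le n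

theorem shiftedCell_mono : Monotone (shiftedCell δ n) :=
  fun _ _ hyz => Nat.findGreatest_mono_left (fun _ hk => hk.trans hyz) n

theorem unshiftedCell_le_shiftedCell : unshiftedCell δ n y ≤ shiftedCell δ n y := by
  unfold unshiftedCell
  split
  · exact Nat.zero_le _
  · exact Nat.findGreatest_mono_left (fun _ hk => hk.le) n

theorem cellBase_shiftedCell_add_le (hy : δ ≤ y) : cellBase δ (shiftedCell δ n y) + δ ≤ y :=
  Nat.findGreatest_spec (P := fun k => cellBase δ k + δ ≤ y) n.zero_le
    (by rwa [cellBase_zero, zero_add])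

theorem le_cellBase_shiftedCell_add_one (hδ : 0 ≤ δ) (htop : y ≤ cellBase δ n + 1) :
    y ≤ cellBase δ (shiftedCell δ n y) + 1 := by
  obtain hk | hk : shiftedCell δ n y = n ∨ ¬cellBase δ (shiftedCell δ n y + 1) + δ ≤ y :=
    Nat.findGreatest_eq_or_not_succ _ n
  · rwa [hk]
  · linarith [not_le.mp hk, cellBase_succ_le hδ (shiftedCell δ n y)]

theorem isCellAssignment_unshiftedCell {m : ℕ} (hδ : 0 ≤ δ) {x : Fin (m + 1) → ℝ}
    (hx : Antitone x) (htop : ∀ j, x j ≤ cellBase δ n + 1) (hL0 : 0 ≤ x (Fin.last m))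
    (hL1 : x (Fin.last m) ≤ 1)
    (hmin : ∀ j, x (Fin.last m) ≤ x j - cellBase δ (unshiftedCell δ n (x j))) :
    IsCellAssignment (cellBase δ) n δ x (fun j => unshiftedCell δ n (x j)) 0 where
  le_n _ := unshiftedCell_le
  antitone := unshiftedCell_mono.comp_antitone hx
  last_eq_zero := unshiftedCell_of_le_one hL1
  le_apply j := by linarith [hmin j]
  apply_le j := by linarith [le_cellBase_unshiftedCell_add_one (n := n) hδ (htop j)]
  shift_eq := by
    rw [if_pos (by simpa using hmin)]

theorem isCellAssignment_shiftedCell {m : ℕ} (hδ : 0 ≤ δ) {x : Fin (m + 1) → ℝ}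
    (hx : Antitone x) (htop : ∀ j, x j ≤ cellBase δ n + 1) (hL0 : δ ≤ x (Fin.last m))
    (hL1 : x (Fin.last m) ≤ 1 + δ)
    (hwit : ∃ j, j ≠ Fin.last m ∧ x j - cellBase δ (shiftedCell δ n (x j)) < x (Fin.last m)) :
    IsCellAssignment (cellBase δ) n δ x
      (Function.update (fun j => shiftedCell δ n (x j)) (Fin.last m) 0) δ where
  le_n j := by
    rcases eq_or_ne j (Fin.last m) with rfl | hj
    · simp
    · simpa [hj] using shiftedCell_le
  antitone i j hij := by
    rcases eq_or_ne j (Fin.last m) with rfl | hj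
    · simp
    · have hi : i ≠ Fin.last m := fun hi => hj (Fin.last_le_iff.mp (hi ▸ hij))
      simpa [hi, hj] using shiftedCell_mono (hx hij)
  last_eq_zero := by simp
  le_apply j := by
    rcases eq_or_ne j (Fin.last m) with rfl | hj
    · simpa using hL0
    · simpa [hj] using cellBase_shiftedCell_add_le (n := n) (hL0.trans (hx (Fin.le_last j)))
  apply_le j := by
    rcases eq_or_ne j (Fin.last m) with rfl | hj
    · simpa [add_comm] using hL1
    · simp only [Function.update_of_ne hj]
      linarith [le_cellBase_shiftedCell_add_one (n := n) hδ (htop j)]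
  shift_eq := by
    obtain ⟨j, hj, hjL⟩ := hwit
    rw [if_neg]
    push Not
    exact ⟨j, by simpa [hj] using hjL⟩

theorem exists_shiftedCell_offset_lt {m : ℕ} (hδ0 : 0 < δ) (hδ1 : 2 * δ ≤ 1)
    {x : Fin (m + 2) → ℝ} (hx : Antitone x) (htop : ∀ j, x j ≤ cellBase δ n + 1)
    (hA : ¬(x (Fin.last (m + 1)) ≤ 1 ∧
      ∀ j, x (Fin.last (m + 1)) ≤ x j - cellBase δ (unshiftedCell δ n (x j)))) :
    δ ≤ x (Fin.last (m + 1)) ∧ ∃ j, j ≠ Fin.last (m + 1) ∧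
      x j - cellBase δ (shiftedCell δ n (x j)) < x (Fin.last (m + 1)) := by
  rcases le_or_gt (x (Fin.last (m + 1))) 1 with hL1 | hL1
  · obtain ⟨j, hj⟩ :
        ∃ j, x j - cellBase δ (unshiftedCell δ n (x j)) < x (Fin.last (m + 1)) := by
      push Not at hA
      exact hA hL1
    have hxjL := hx (Fin.le_last j)
    have hxj : 1 < x j := by
      by_contra! hxj
      rw [unshiftedCell_of_le_one hxj, cellBase_zero] at hj
      linarith
    have hlt := cellBase_unshiftedCell_add_lt (n := n) (by linarith : δ ≤ 1) hxj
    have hle := cellBase_mono hδ1 (unshiftedCell_le_shiftedCell (δ := δ) (n := n) (y := x j))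
    refine ⟨by linarith, j, fun hjL => ?_, by linarith⟩
    rw [hjL] at hxj
    linarith
  · refine ⟨by linarith, 0, Fin.last_pos.ne, ?_⟩
    linarith [le_cellBase_shiftedCell_add_one (n := n) hδ0.le (htop 0)]

theorem exists_isCellAssignment {m : ℕ} (hn : 1 ≤ n) (hδ : (n + 2) * δ = 1)
    {x : Fin (m + 2) → ℝ} (hx : x ∈ Sset (m + 2) (n + δ))
    (hL : x (Fin.last (m + 1)) ≤ 1 + δ) :
    ∃ w s, IsCellAssignment (cellBase δ) n δ x w s := by
  have hanti : Antitone x := hx.2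
  have hδ0 : 0 < δ := by nlinarith
  have hδ1 : 2 * δ ≤ 1 := by nlinarith
  have htop : ∀ j, x j ≤ cellBase δ n + 1 := fun j => by
    rw [cellBase_add_one (by omega) hδ]
    exact (hx.1 j).2
  by_cases hA : x (Fin.last (m + 1)) ≤ 1 ∧
      ∀ j, x (Fin.last (m + 1)) ≤ x j - cellBase δ (unshiftedCell δ n (x j))
  · exact ⟨_, _, isCellAssignment_unshiftedCell hδ0.le hanti htop (hx.1 _).1 hA.1 hA.2⟩
  · obtain ⟨hL0, hwit⟩ := exists_shiftedCell_offset_lt hδ0 hδ1 hanti htop hA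
    exact ⟨_, _, isCellAssignment_shiftedCell hδ0.le hanti htop hL0 hL hwit⟩

end BaseCover

end

/-- the base `S^{n+δ}_1 = {x ∈ S^{n+δ} : 0 ≤ x_d ≤ 1+δ}` can be covered by
`(n+1)^d - n^d` unit right `d`-simplices. -/
theorem base_cover (d n : ℕ) (hd : 2 ≤ d) (hn : 1 ≤ n)
    (δ : ℝ) (hδ : δ = ((n : ℝ) + 2)⁻¹) :
    ∃ (v : Fin ((n + 1) ^ d - n ^ d) → (Fin d → ℝ))
      (π : Fin ((n + 1) ^ d - n ^ d) → Equiv.Perm (Fin d)),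
      {x ∈ Sset d ((n : ℝ) + δ) |
          0 ≤ x ⟨d - 1, by omega⟩ ∧ x ⟨d - 1, by omega⟩ ≤ 1 + δ}
        ⊆ ⋃ i, kuhn d (v i) (π i) := by
  obtain ⟨m, rfl⟩ : ∃ m, d = m + 2 := ⟨d - 2, by omega⟩
  have hcard := card_exists_eq_zero (Fin (m + 2)) n
  rw [Nat.card_fin] at hcard
  let e := (Finite.equivFinOfCardEq hcard).symm
  refine ⟨fun i => BaseCover.kuhnVertex (BaseCover.cellBase δ) δ (e i).1,
    fun i => (BaseCover.kuhnPerm (e i).1).symm, ?_⟩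
  rintro x ⟨hx, -, hxL⟩
  have hδn : (n + 2) * δ = 1 := by
    rw [hδ]
    exact mul_inv_cancel₀ (by positivity)
  obtain ⟨w, s, hw⟩ := BaseCover.exists_isCellAssignment hn hδn hx hxL
  obtain ⟨F, hF0, hxF⟩ := hw.exists_mem_kuhn hx.2
  exact Set.mem_iUnion.mpr ⟨e.symm ⟨F, hF0⟩, by simpa using hxF⟩
end

section
/- Let d ≥ 2 and n ≥ 1 be integers and set δ := 1/(n+2). Let x ∈ S^{n+δ} with x_d ≤ 1+δ, let v ∈ ℤ^d with all components nonnegative and v_d = 0, set w := x − (1−δ)v, and let π be a permutation of {1,…,d} such that: (i) 1 ≥ w_{π(1)} ≥ w_{π(2)} ≥ … ≥ w_{π(d)} ≥ 0 and π(d) = d; (ii) for every j with 1 ≤ j < d, if v_j > 0 then w_j > δ; and (iii) whenever w_{π(j)} = w_{π(j+1)} for 1 ≤ j < d, one has π(j) < π(j+1). Then the pair (v,π) is admissible for n+1 (i.e. v ∈ S^n and for every j < d with v_j = v_{j+1}, π⁻¹(j) < π⁻¹(j+1)), and x belongs to the Kuhn simplex k((1−δ)v, π). -/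
/-!
Write `w = x - (1-δ)v`. If `v` increased somewhere, say `v_i < v_j` with `i ≤ j`, then
`w_j ≤ w_i - (1-δ) ≤ δ` although `v_j > 0` forces `w_j > δ`; so `v` is antitone. For `v_i > 0`
the same lower bound gives `(1-δ)v_i < x_i - δ ≤ n`, and `(1-δ)(n+1) = n + δ` then yields
`v_i ≤ n`. Finally, `π` lists the coordinates by decreasing `w`, breaking ties by increasing
index, so `i ↦ (-w_{π i}, π i)` is lexicographically strictly increasing; as `v_j = v_{j+1}`
gives `w_{j+1} ≤ w_j`, the coordinate `j` comes first in `π`.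
-/

open Equiv OrderDual

lemma Fin.strictMono_of_lt_add_one {α : Type*} [Preorder α] {d : ℕ} {f : Fin d → α}
    (hf : ∀ (j : Fin d) (hj : (j : ℕ) + 1 < d), f j < f ⟨(j : ℕ) + 1, hj⟩) : StrictMono f := by
  cases d with
  | zero => exact fun i => i.elim0
  | succ d => exact Fin.strictMono_iff_lt_succ.2 fun i => hf i.castSucc (by simp)

section SortedPermutation

variable {α : Type*} [LinearOrder α] {d : ℕ} {w : Fin d → α} {π : Perm (Fin d)}

lemma Equiv.Perm.strictMono_lex_of_antitone_of_ties
    (hanti : Antitone (w ∘ π))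
    (hties : ∀ (j : Fin d) (h : (j : ℕ) + 1 < d),
      w (π j) = w (π ⟨(j : ℕ) + 1, h⟩) → π j < π ⟨(j : ℕ) + 1, h⟩) :
    StrictMono fun i => toLex (toDual (w (π i)), π i) := by
  refine Fin.strictMono_of_lt_add_one fun j hj => Prod.Lex.toLex_lt_toLex.2 ?_
  have hle : w (π ⟨(j : ℕ) + 1, hj⟩) ≤ w (π j) := hanti (Fin.mk_le_mk.2 j.val.le_succ)
  rcases hle.lt_or_eq with hlt | heq
  · exact Or.inl hlt
  · exact Or.inr ⟨heq.symm, hties j hj heq.symm⟩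

lemma Equiv.Perm.symm_lt_symm_of_antitone_of_ties
    (hanti : Antitone (w ∘ π))
    (hties : ∀ (j : Fin d) (h : (j : ℕ) + 1 < d),
      w (π j) = w (π ⟨(j : ℕ) + 1, h⟩) → π j < π ⟨(j : ℕ) + 1, h⟩)
    {a b : Fin d} (hab : a < b) (hw : w b ≤ w a) : π.symm a < π.symm b := by
  by_contra! hba
  rcases hba.lt_or_eq with hlt | heq
  · have key := π.strictMono_lex_of_antitone_of_ties hanti hties hlt
    simp only [Equiv.apply_symm_apply, Prod.Lex.toLex_lt_toLex, toDual_lt_toDual] at key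
    rcases key with hwlt | ⟨-, hlt'⟩
    · exact hwlt.not_ge hw
    · exact hlt'.not_gt hab
  · exact hab.ne (π.symm.injective heq.symm)

end SortedPermutation

section Coordinates

variable {d : ℕ} {δ : ℝ} {x : Fin d → ℝ} {v : Fin d → ℤ}

lemma antitone_int_of_gap (hx : Antitone x) (hv : ∀ i, 0 ≤ v i) (hδ : δ < 1)
    (hw : ∀ i, x i - (1 - δ) * v i ≤ 1)
    (hgap : ∀ j, 0 < v j → δ < x j - (1 - δ) * v j) : Antitone v := by
  intro i j hij
  by_contra! hlt
  have hstep : (v i : ℝ) + 1 ≤ v j := by exact_mod_cast hlt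
  have hδj := hgap j ((hv i).trans_lt hlt)
  nlinarith [hx hij, hw i]

lemma int_le_of_mul_lt {n : ℕ} (hδ : δ = ((n : ℝ) + 2)⁻¹) {k : ℤ}
    (hk : (1 - δ) * k < n) : k ≤ n := by
  by_contra! hlt
  have hk1 : (n : ℝ) + 1 ≤ k := by exact_mod_cast hlt
  have hδpos : 0 < δ := hδ ▸ by positivity
  have hδn : δ * ((n : ℝ) + 2) = 1 := by rw [hδ]; field_simp
  nlinarith

end Coordinates

/-- if `x ∈ S^{n+δ}` with `x_d ≤ 1+δ`, `v ∈ ℤ^d_+` with `v_d = 0`,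
`w = x - (1-δ)v`, and `π` satisfies
(i) `1 ≥ w_{π(1)} ≥ … ≥ w_{π(d)} ≥ 0` with `π(d) = d`,
(ii) `v_j > 0 ⟹ w_j > δ` for `j < d`, and
(iii) equal components of `w` are ordered by index in `π`,
then `(v,π)` is admissible for `n+1` and `x ∈ k((1-δ)v, π)`. -/
theorem type_a_cover (d n : ℕ) (hd : 2 ≤ d)
    (δ : ℝ) (hδ : δ = ((n : ℝ) + 2)⁻¹)
    (x : Fin d → ℝ) (hx : x ∈ Sset d ((n : ℝ) + δ))
    (v : Fin d → ℤ) (hv : ∀ i, 0 ≤ v i) (hvd : v ⟨d - 1, by omega⟩ = 0)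
    (w : Fin d → ℝ) (hw : w = fun i => x i - (1 - δ) * (v i : ℝ))
    (π : Equiv.Perm (Fin d))
    (hi : (∀ i : Fin d, 0 ≤ w (π i) ∧ w (π i) ≤ 1) ∧
          (∀ i j : Fin d, i ≤ j → w (π j) ≤ w (π i)) ∧
          π ⟨d - 1, by omega⟩ = ⟨d - 1, by omega⟩)
    (hii : ∀ j : Fin d, (j : ℕ) + 1 < d → 0 < v j → δ < w j)
    (hiii : ∀ (j : Fin d) (h : (j : ℕ) + 1 < d),
        w (π j) = w (π ⟨(j : ℕ) + 1, h⟩) → π j < π ⟨(j : ℕ) + 1, h⟩) :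
    admissible d (n + 1) v π ∧
      x ∈ kuhn d (fun i => (1 - δ) * (v i : ℝ)) π := by
  obtain ⟨hw_bd, hw_anti, -⟩ := hi
  obtain ⟨hx_bd, hx_anti⟩ := hx
  have hδ1 : δ < 1 := by
    rw [hδ]
    exact inv_lt_one_of_one_lt₀ (by linarith [(n.cast_nonneg : (0 : ℝ) ≤ n)])
  have hw_sorted : Antitone (w ∘ π) := fun i j hij => hw_anti i j hij
  have hw_le : ∀ i, w i ≤ 1 := fun i => by simpa using (hw_bd (π.symm i)).2
  have hgap : ∀ j, 0 < v j → δ < w j := fun j hj => by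
    by_cases hjd : (j : ℕ) + 1 < d
    · exact hii j hjd hj
    · have hj_last : j = ⟨d - 1, by omega⟩ := Fin.ext (by simp only; omega)
      exact absurd hvd (hj_last ▸ hj.ne')
  subst hw
  have hv_anti : Antitone v := antitone_int_of_gap hx_anti hv hδ1 hw_le hgap
  have hv_le : ∀ i, v i ≤ n := fun i => (hv i).eq_or_lt.elim (fun h => h ▸ by positivity)
    fun hpos => int_le_of_mul_lt hδ (by linarith [hgap i hpos, (hx_bd i).2])
  refine ⟨⟨⟨fun i => ⟨Int.cast_nonneg (hv i), ?_⟩, fun i j hij => Int.cast_le.2 (hv_anti hij)⟩,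
    fun j hj hvj => ?_⟩, hw_bd, hw_anti⟩
  · rw [Nat.cast_add_one, add_sub_cancel_right]
    exact Int.cast_le.2 (hv_le i)
  · refine π.symm_lt_symm_of_antitone_of_ties hw_sorted hiii (Fin.mk_lt_mk.2 j.val.lt_succ_self) ?_
    simp only [← hvj]
    linarith [hx_anti j ⟨(j : ℕ) + 1, hj⟩ (Fin.mk_le_mk.2 j.val.le_succ)]
end

section
/- Let d ≥ 2 and n ≥ 1 be integers and set δ := 1/(n+2), and let e := (1,…,1) ∈ ℝ^d. Let x ∈ S^{n+δ} with δ < x_d ≤ 1+δ, let v ∈ ℤ^d with all components nonnegative and v_d = 0, set w := x − (1−δ)v, and let π be a permutation of {1,…,d} such that: (i) 1+δ ≥ w_{π(1)} ≥ w_{π(2)} ≥ … ≥ w_{π(d)} ≥ δ; (ii) w_j < 1 for all j < d; (iii) whenever w_{π(j)} = w_{π(j+1)} for 1 ≤ j < d, one has π(j) < π(j+1); and (iv) π⁻¹(d) < d. Then the pair (v,π) is admissible for n+1 (i.e. v ∈ S^n and for every j < d with v_j = v_{j+1}, π⁻¹(j) < π⁻¹(j+1)), and x belongs to the Kuhn simplex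 k((1−δ)v + δe, π). -/
lemma Int.le_of_mul_lt_mul_add_one {c : ℝ} (hc : 0 < c) {p q : ℤ}
    (h : c * p < c * (q + 1)) : p ≤ q := by
  have : (p : ℝ) < q + 1 := (mul_lt_mul_iff_right₀ hc).mp h
  exact Int.lt_add_one_iff.mp (by exact_mod_cast this)

lemma inv_add_two_lt_one (n : ℕ) : ((n : ℝ) + 2)⁻¹ < 1 :=
  inv_lt_one_of_one_lt₀ (by linarith [n.cast_nonneg (α := ℝ)])

lemma lt_one_sub_inv_add_two_mul_add_one (n : ℕ) :
    (n : ℝ) < (1 - ((n : ℝ) + 2)⁻¹) * ((n : ℝ) + 1) := by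
  have h : (1 - ((n : ℝ) + 2)⁻¹) * ((n : ℝ) + 1) = n + ((n : ℝ) + 2)⁻¹ := by
    field_simp; ring
  rw [h]
  exact lt_add_of_pos_right _ (by positivity)

lemma Fin.lt_of_antitone_of_eq {α β : Type*} [PartialOrder α] [Preorder β] {d : ℕ}
    {f : Fin d → α} (hf : Antitone f) {σ : Fin d → β}
    (hσ : ∀ (j : Fin d) (h : (j : ℕ) + 1 < d), f j = f ⟨j + 1, h⟩ → σ j < σ ⟨j + 1, h⟩)
    {a b : Fin d} (hab : a < b) (heq : f a = f b) : σ a < σ b := by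
  obtain ⟨b, hb⟩ := b
  replace hab : (a : ℕ) + 1 ≤ b := hab
  induction b, hab using Nat.le_induction with
  | base => exact hσ a hb heq
  | succ m ham ih =>
    have hm : m < d := by omega
    have hfm : f a = f ⟨m, hm⟩ :=
      le_antisymm (heq ▸ hf (Fin.mk_le_mk.mpr (by omega))) (hf (Fin.mk_le_mk.mpr (by omega)))
    exact (ih hm hfm).trans (hσ _ hb (hfm ▸ heq))

lemma mem_kuhn_add_const {d : ℕ} {x u : Fin d → ℝ} {δ : ℝ} {π : Equiv.Perm (Fin d)}
    (hbd : ∀ i, δ ≤ x (π i) - u (π i) ∧ x (π i) - u (π i) ≤ 1 + δ)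
    (hanti : Antitone fun i => x (π i) - u (π i)) :
    x ∈ kuhn d (fun i => u i + δ) π := by
  refine ⟨fun i => ⟨?_, ?_⟩, fun i j hij => ?_⟩
  · linarith [hbd i]
  · linarith [hbd i]
  · linarith [hanti hij]

section Shift

variable {d : ℕ} {δ : ℝ} {x : Fin d → ℝ} {v : Fin d → ℤ}

lemma le_of_le_sub_one_sub_mul {n : ℕ} (hδ : δ = ((n : ℝ) + 2)⁻¹)
    (hx : ∀ i, x i ≤ n + δ) (hw : ∀ i, δ ≤ x i - (1 - δ) * v i) (i : Fin d) : v i ≤ n := by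
  apply Int.le_of_mul_lt_mul_add_one (sub_pos.mpr (hδ ▸ inv_add_two_lt_one n))
  push_cast
  linarith [hx i, hw i, hδ ▸ lt_one_sub_inv_add_two_mul_add_one n]

lemma antitone_of_le_sub_one_sub_mul (hδ : δ < 1) (hx : Antitone x)
    (hw : ∀ i, δ ≤ x i - (1 - δ) * v i)
    (hw1 : ∀ j : Fin d, (j : ℕ) + 1 < d → x j - (1 - δ) * v j < 1) :
    Antitone fun i => (v i : ℝ) := by
  intro i j hij
  rcases hij.eq_or_lt with rfl | hlt
  · rfl
  have hle : v j ≤ v i := by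
    apply Int.le_of_mul_lt_mul_add_one (sub_pos.mpr hδ)
    linarith [hx hij, hw j, hw1 i (by omega)]
  exact Int.cast_le.mpr hle

lemma symm_lt_symm_succ_of_eq {w : Fin d → ℝ} (hw : w = fun i => x i - (1 - δ) * v i)
    (hx : Antitone x) {π : Equiv.Perm (Fin d)} (hπ : Antitone fun i => w (π i))
    (hties : ∀ (j : Fin d) (h : (j : ℕ) + 1 < d),
        w (π j) = w (π ⟨(j : ℕ) + 1, h⟩) → π j < π ⟨(j : ℕ) + 1, h⟩)
    (j : Fin d) (hj : (j : ℕ) + 1 < d) (hvj : v j = v ⟨j + 1, hj⟩) :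
    π.symm j < π.symm ⟨j + 1, hj⟩ := by
  by_contra hnot
  have hlt : π.symm ⟨j + 1, hj⟩ < π.symm j :=
    (not_lt.mp hnot).lt_of_ne fun h => by simpa [Fin.ext_iff] using π.symm.injective h
  have hle : w j ≤ w ⟨j + 1, hj⟩ := by simpa using hπ hlt.le
  have hge : w ⟨j + 1, hj⟩ ≤ w j := by
    subst hw
    simp only [hvj]
    linarith [hx (Fin.mk_le_mk.mpr (Nat.le_succ j) : j ≤ ⟨j + 1, hj⟩)]
  have := Fin.lt_of_antitone_of_eq hπ hties hlt (by simpa using hge.antisymm hle)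
  simp [Fin.lt_def] at this

end Shift

/-- if `x ∈ S^{n+δ}` with `δ < x_d ≤ 1+δ`, `v ∈ ℤ^d_+` with `v_d = 0`,
`w = x - (1-δ)v`, and `π` satisfies
(i) `1+δ ≥ w_{π(1)} ≥ … ≥ w_{π(d)} ≥ δ`,
(ii) `w_j < 1` for all `j < d`,
(iii) equal components of `w` are ordered by index in `π`, and
(iv) `π⁻¹(d) < d`,
then `(v,π)` is admissible for `n+1` and `x ∈ k((1-δ)v + δe, π)`. -/
theorem type_b_cover (d n : ℕ)
    (δ : ℝ) (hδ : δ = ((n : ℝ) + 2)⁻¹)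
    (x : Fin d → ℝ) (hx : x ∈ Sset d ((n : ℝ) + δ))
    (v : Fin d → ℤ) (hv : ∀ i, 0 ≤ v i)
    (w : Fin d → ℝ) (hw : w = fun i => x i - (1 - δ) * (v i : ℝ))
    (π : Equiv.Perm (Fin d))
    (hi : (∀ i : Fin d, δ ≤ w (π i) ∧ w (π i) ≤ 1 + δ) ∧
          (∀ i j : Fin d, i ≤ j → w (π j) ≤ w (π i)))
    (hii : ∀ j : Fin d, (j : ℕ) + 1 < d → w j < 1)
    (hiii : ∀ (j : Fin d) (h : (j : ℕ) + 1 < d),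
        w (π j) = w (π ⟨(j : ℕ) + 1, h⟩) → π j < π ⟨(j : ℕ) + 1, h⟩) :
    admissible d (n + 1) v π ∧
      x ∈ kuhn d (fun i => (1 - δ) * (v i : ℝ) + δ) π := by
  have hδ1 : δ < 1 := hδ ▸ inv_add_two_lt_one n
  have hties := symm_lt_symm_succ_of_eq hw hx.2 hi.2 hiii
  subst hw
  have hwδ (i : Fin d) : δ ≤ x i - (1 - δ) * v i := by simpa using (hi.1 (π.symm i)).1
  have hvn := le_of_le_sub_one_sub_mul hδ (fun i => (hx.1 i).2) hwδ
  refine ⟨⟨⟨fun i => ⟨?_, ?_⟩, antitone_of_le_sub_one_sub_mul hδ1 hx.2 hwδ hii⟩, hties⟩,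
    mem_kuhn_add_const hi.1 hi.2⟩
  · exact Int.cast_nonneg_iff.mpr (hv i)
  · have : (v i : ℝ) ≤ n := by exact_mod_cast hvn i
    push_cast
    linarith
end
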